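/- For the interval-swapping transformation φ_h^{(i)}, the left-successor Haar function transforms as χ_{h+1}^{(2i-1)} ∘ φ_h^{(i)} = (√2·χ_h^{(i)} + χ_{h+1}^{(2i-1)} − χ_{h+1}^{(2i)})/2 on [0,1). -/
import Mathlib


open MeasureTheory Real Set
open scoped Classical

noncomputable section

/-- The dyadic interval `Δ_k^{(j)} = [(j-1)/2^k, j/2^k)`. -/
def dyadic (k : ℕ) (j : ℤ) : Set ℝ := Set.Ico (((j : ℝ) - 1) / 2 ^ k) ((j : ℝ) / 2 ^ k)

/-- The Haar function `χ_k^{(j)}`. -/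
def haar (k : ℕ) (j : ℤ) (t : ℝ) : ℝ :=
  if t ∈ dyadic k (2 * j - 1) then (2 : ℝ) ^ (((k : ℝ) - 1) / 2)
  else if t ∈ dyadic k (2 * j) then -(2 : ℝ) ^ (((k : ℝ) - 1) / 2)
  else 0

/-- Membership in the dyadic tree `𝔻`. -/
def memD (kj : ℕ × ℤ) : Prop := 1 ≤ kj.1 ∧ 1 ≤ kj.2 ∧ kj.2 ≤ 2 ^ (kj.1 - 1)

/-- The finite dyadic tree `𝔻_m^n`. -/
def Dtree (m n : ℕ) : Finset (ℕ × ℤ) :=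
  (Finset.Icc m n).biUnion fun k => (Finset.Icc (1 : ℤ) (2 ^ (k - 1))).image fun j => (k, j)

/-- Number of indices of `F` lying on the branch through `t`. -/
def branchCount (F : Finset (ℕ × ℤ)) (t : ℝ) : ℕ :=
  (F.filter fun kj => t ∈ dyadic (kj.1 - 1) kj.2).card

/-- The local height of a finite index set. -/
def lh (F : Finset (ℕ × ℤ)) : ℕ :=
  sSup {m | ∃ t ∈ Set.Ico (0 : ℝ) 1, branchCount F t = m}

/-- The transformation `φ_h^{(i)}` interchanging `Δ_{h+1}^{(4i-2)}` and `Δ_{h+1}^{(4i-1)}`. -/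
def phi (h : ℕ) (i : ℤ) (t : ℝ) : ℝ :=
  if t ∈ dyadic (h + 1) (4 * i - 2) then t + 1 / 2 ^ (h + 1)
  else if t ∈ dyadic (h + 1) (4 * i - 1) then t - 1 / 2 ^ (h + 1)
  else t

/-- The Haar type ideal norm `τ(T | ℋ(F))`. -/
def tau {X Y : Type*} [NormedAddCommGroup X] [NormedSpace ℝ X]
    [NormedAddCommGroup Y] [NormedSpace ℝ Y]
    (T : X →L[ℝ] Y) (F : Finset (ℕ × ℤ)) : ℝ :=
  sInf {c : ℝ | 0 ≤ c ∧ ∀ x : ℕ × ℤ → X,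
    Real.sqrt (∫ t in Set.Ico (0 : ℝ) 1, ‖∑ kj ∈ F, haar kj.1 kj.2 t • T (x kj)‖ ^ 2)
      ≤ c * Real.sqrt (∑ kj ∈ F, ‖x kj‖ ^ 2)}

end

lemma mem_dyadic_iff' (k : ℕ) (j : ℤ) (x : ℝ) :
    x ∈ dyadic k j ↔ (j : ℝ) - 1 ≤ x * 2 ^ k ∧ x * 2 ^ k < j := by
  have hk : (0:ℝ) < 2 ^ k := by positivity
  rw [dyadic, Set.mem_Ico, div_le_iff₀ hk, lt_div_iff₀ hk]

lemma haar_val_pos (k : ℕ) (j : ℤ) (t : ℝ) (H1 : 2*(j:ℝ) - 2 ≤ t*2^k) (H2 : t*2^k < 2*(j:ℝ) - 1) :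
    haar k j t = (2:ℝ) ^ (((k:ℝ)-1)/2) := by
  have A : t ∈ dyadic k (2*j-1) := by
    rw [mem_dyadic_iff']; push_cast; constructor <;> linarith
  rw [haar, if_pos A]

lemma haar_val_neg (k : ℕ) (j : ℤ) (t : ℝ) (H1 : 2*(j:ℝ) - 1 ≤ t*2^k) (H2 : t*2^k < 2*(j:ℝ)) :
    haar k j t = -(2:ℝ) ^ (((k:ℝ)-1)/2) := by
  have A : ¬ t ∈ dyadic k (2*j-1) := by
    rw [mem_dyadic_iff']; rintro ⟨a, b⟩; push_cast at b; linarith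
  have B : t ∈ dyadic k (2*j) := by
    rw [mem_dyadic_iff']; push_cast; constructor <;> linarith
  rw [haar, if_neg A, if_pos B]

lemma haar_val_zero (k : ℕ) (j : ℤ) (t : ℝ)
    (H : t*2^k < 2*(j:ℝ) - 2 ∨ 2*(j:ℝ) ≤ t*2^k) : haar k j t = 0 := by
  have A : ¬ t ∈ dyadic k (2*j-1) := by
    rw [mem_dyadic_iff']; rintro ⟨a, b⟩; push_cast at a b; rcases H with H | H <;> linarith
  have B : ¬ t ∈ dyadic k (2*j) := by
    rw [mem_dyadic_iff']; rintro ⟨a, b⟩; push_cast at a b; rcases H with H | H <;> linarith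
  rw [haar, if_neg A, if_neg B]

theorem haar_comp_phi_left (h : ℕ) (hh : 1 ≤ h) (i : ℤ)
    (hi1 : 1 ≤ i) (hi2 : i ≤ 2 ^ (h - 1)) :
    ∀ t ∈ Set.Ico (0 : ℝ) 1,
      haar (h + 1) (2 * i - 1) (phi h i t) =
        (Real.sqrt 2 * haar h i t + haar (h + 1) (2 * i - 1) t
          - haar (h + 1) (2 * i) t) / 2 := by
  intro t _
  have hD : (0:ℝ) < 2 ^ (h+1) := by positivity
  have e1 : (((h+1:ℕ):ℝ) - 1)/2 = (h:ℝ)/2 := by push_cast; ring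
  have hX : Real.sqrt 2 * (2:ℝ)^(((h:ℝ)-1)/2) = (2:ℝ)^((h:ℝ)/2) := by
    rw [Real.sqrt_eq_rpow, ← Real.rpow_add two_pos]; congr 1; ring
  have e2 : (t + 1/2^(h+1)) * 2^(h+1) = t*2^(h+1) + 1 := by field_simp
  have e3 : (t - 1/2^(h+1)) * 2^(h+1) = t*2^(h+1) - 1 := by field_simp
  have e4 : t * 2^h = (t*2^(h+1))/2 := by rw [pow_succ]; ring
  set s : ℝ := t * 2^(h+1) with hs
  set y : ℝ := (i:ℝ) with hy
  have c2i1 : ((2*i-1:ℤ):ℝ) = 2*y - 1 := by push_cast; ring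
  have c2i : ((2*i:ℤ):ℝ) = 2*y := by push_cast; ring
  rcases lt_or_ge s (4*y - 4) with c0 | c0
  · -- left of the support
    have p : phi h i t = t := by
      rw [phi, if_neg, if_neg] <;>
        (rw [mem_dyadic_iff']; rintro ⟨a, b⟩; push_cast at a b; linarith)
    rw [p, haar_val_zero (h+1) (2*i-1) t (by rw [c2i1]; left; linarith),
        haar_val_zero h i t (by rw [e4]; left; linarith),
        haar_val_zero (h+1) (2*i) t (by rw [c2i]; left; linarith)]
    norm_num
  · rcases le_or_gt (4*y) s with c4 | c4
    · -- right of the support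
      have p : phi h i t = t := by
        rw [phi, if_neg, if_neg] <;>
          (rw [mem_dyadic_iff']; rintro ⟨a, b⟩; push_cast at a b; linarith)
      rw [p, haar_val_zero (h+1) (2*i-1) t (by rw [c2i1]; right; linarith),
          haar_val_zero h i t (by right; rw [e4]; linarith),
          haar_val_zero (h+1) (2*i) t (by rw [c2i]; right; linarith)]
      norm_num
    · rcases lt_or_ge s (4*y - 3) with c1 | c1
      · -- first quarter
        have p : phi h i t = t := by
          rw [phi, if_neg, if_neg] <;>
            (rw [mem_dyadic_iff']; rintro ⟨a, b⟩; push_cast at a b; linarith)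
        rw [p, haar_val_pos (h+1) (2*i-1) t (by rw [c2i1]; linarith) (by rw [c2i1]; linarith),
            haar_val_pos h i t (by rw [e4]; linarith) (by rw [e4]; linarith),
            haar_val_zero (h+1) (2*i) t (by rw [c2i]; left; linarith), e1]
        linarith [hX]
      · rcases lt_or_ge s (4*y - 2) with c2 | c2
        · -- second quarter: shifted right
          have p : phi h i t = t + 1/2^(h+1) := by
            rw [phi, if_pos]
            rw [mem_dyadic_iff']; push_cast; constructor <;> linarith
          have harg : (t + 1/2^(h+1)) * 2^(h+1) = s + 1 := e2
          rw [p, haar_val_zero (h+1) (2*i-1) (t + 1/2^(h+1))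
              (by rw [harg, c2i1]; right; linarith),
            haar_val_pos h i t (by rw [e4]; linarith) (by rw [e4]; linarith),
            haar_val_neg (h+1) (2*i-1) t (by rw [c2i1]; linarith) (by rw [c2i1]; linarith),
            haar_val_zero (h+1) (2*i) t (by rw [c2i]; left; linarith), e1]
          linarith [hX]
        · rcases lt_or_ge s (4*y - 1) with c3 | c3
          · -- third quarter: shifted left
            have p : phi h i t = t - 1/2^(h+1) := by
              rw [phi, if_neg, if_pos]
              · rw [mem_dyadic_iff']; push_cast; constructor <;> linarith
              · rw [mem_dyadic_iff']; rintro ⟨a, b⟩; push_cast at a b; linarith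
            have harg : (t - 1/2^(h+1)) * 2^(h+1) = s - 1 := e3
            rw [p, haar_val_neg (h+1) (2*i-1) (t - 1/2^(h+1))
                (by rw [harg, c2i1]; linarith) (by rw [harg, c2i1]; linarith),
              haar_val_neg h i t (by rw [e4]; linarith) (by rw [e4]; linarith),
              haar_val_zero (h+1) (2*i-1) t (by rw [c2i1]; right; linarith),
              haar_val_pos (h+1) (2*i) t (by rw [c2i]; linarith) (by rw [c2i]; linarith), e1]
            linarith [hX]
          · -- fourth quarter
            have p : phi h i t = t := by
              rw [phi, if_neg, if_neg] <;>
                (rw [mem_dyadic_iff']; rintro ⟨a, b⟩; push_cast at a b; linarith)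
            rw [p, haar_val_zero (h+1) (2*i-1) t (by rw [c2i1]; right; linarith),
                haar_val_neg h i t (by rw [e4]; linarith) (by rw [e4]; linarith),
                haar_val_neg (h+1) (2*i) t (by rw [c2i]; linarith) (by rw [c2i]; linarith), e1]
            linarith [hX]
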